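/- arXiv:1412.8232 — 6 statements merged into one kernel-verified Lean document; each statement's English description precedes it below -/
import Mathlib

section
/- For every p > 0, ω ≥ 0, and u₀ > 0, the integral T(u₀) = 2 ∫₀¹ dx / √(ω(1 - x²) + u₀^{2p}(1 - x^{2p+2})) is finite, and T is strictly decreasing in u₀ on (0, ∞). -/
open Real MeasureTheory Set

private lemma denom_lower (p ω u : ℝ) (hp : 0 < p) (hω : 0 ≤ ω) (hu : 0 < u)
    {x : ℝ} (hx0 : 0 < x) (hx1 : x ≤ 1) :
    u ^ (2*p) * (1 - x) ≤ ω * (1 - x ^ 2) + u ^ (2 * p) * (1 - x ^ (2 * p + 2)) := by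
  have hq : x ^ (2*p+2) ≤ x := by
    have := Real.rpow_le_rpow_of_exponent_ge hx0 hx1 (by linarith : (1:ℝ) ≤ 2*p+2)
    rwa [Real.rpow_one] at this
  have hupos : 0 < u ^ (2*p) := Real.rpow_pos_of_pos hu _
  have hx2 : x ^ 2 ≤ 1 := by nlinarith
  nlinarith [mul_le_mul_of_nonneg_left (by linarith : 1 - x ≤ 1 - x ^ (2*p+2)) hupos.le]

private lemma sqrt_pow_mul (p u : ℝ) (hu : 0 < u) {y : ℝ} :
    Real.sqrt (u ^ (2*p) * y) = u ^ p * y ^ (1/2 : ℝ) := by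
  rw [Real.sqrt_mul (Real.rpow_nonneg hu.le _), ← Real.sqrt_eq_rpow]
  congr 1
  rw [show (2*p) = p*2 by ring, Real.rpow_mul hu.le,
    show ((2:ℝ)) = ((2:ℕ):ℝ) by norm_num, Real.rpow_natCast,
    Real.sqrt_sq (Real.rpow_nonneg hu.le p)]

private lemma key_int (p ω u : ℝ) (hp : 0 < p) (hω : 0 ≤ ω) (hu : 0 < u) :
    IntervalIntegrable
      (fun x : ℝ => 1 / Real.sqrt (ω * (1 - x ^ 2) + u ^ (2 * p) * (1 - x ^ (2 * p + 2))))
      volume 0 1 := by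
  have hg : IntervalIntegrable (fun x : ℝ => (u ^ p)⁻¹ * (1 - x) ^ (-(1/2) : ℝ)) volume 0 1 := by
    have h := (intervalIntegral.intervalIntegrable_rpow' (a := 0) (b := 1) (r := -(1/2))
      (by norm_num)).comp_sub_left 1
    simpa using (h.symm.const_mul _)
  refine hg.mono_fun' ?_ ?_
  · exact (by fun_prop : Measurable (fun x : ℝ => 1 / Real.sqrt
      (ω * (1 - x ^ 2) + u ^ (2 * p) * (1 - x ^ (2 * p + 2))))).aestronglyMeasurable
  · rw [uIoc_of_le (zero_le_one' ℝ)]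
    filter_upwards [ae_restrict_mem measurableSet_Ioc] with x hx
    obtain ⟨hx0, hx1⟩ := hx
    have hD := denom_lower p ω u hp hω hu hx0 hx1
    have h1x : 0 ≤ 1 - x := by linarith
    have heq : u ^ p * (1 - x) ^ (1/2 : ℝ) = Real.sqrt (u ^ (2*p) * (1 - x)) :=
      (sqrt_pow_mul p u hu).symm
    have hnorm : ‖1 / Real.sqrt (ω * (1 - x ^ 2) + u ^ (2 * p) * (1 - x ^ (2 * p + 2)))‖
        = 1 / Real.sqrt (ω * (1 - x ^ 2) + u ^ (2 * p) * (1 - x ^ (2 * p + 2))) := by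
      rw [Real.norm_eq_abs, abs_of_nonneg]
      positivity
    rw [hnorm]
    have hrw : (u ^ p)⁻¹ * (1 - x) ^ (-(1/2) : ℝ)
        = 1 / Real.sqrt (u ^ (2*p) * (1 - x)) := by
      rw [← heq, Real.rpow_neg h1x]
      field_simp
    rw [hrw]
    rcases eq_or_lt_of_le hx1 with h | h
    · subst h
      simp [Real.one_rpow]
    · have hpos : 0 < u ^ (2*p) * (1 - x) :=
        mul_pos (Real.rpow_pos_of_pos hu _) (by linarith)
      have hs : 0 < Real.sqrt (u ^ (2*p) * (1 - x)) := Real.sqrt_pos.2 hpos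
      exact one_div_le_one_div_of_le hs (Real.sqrt_le_sqrt hD)

private lemma ptwise_le (p ω a b : ℝ) (hp : 0 < p) (hω : 0 ≤ ω) (ha : 0 < a) (hab : a < b)
    {x : ℝ} (hx0 : 0 < x) (hx1 : x ≤ 1) :
    1 / Real.sqrt (ω * (1 - x ^ 2) + b ^ (2 * p) * (1 - x ^ (2 * p + 2)))
      ≤ 1 / Real.sqrt (ω * (1 - x ^ 2) + a ^ (2 * p) * (1 - x ^ (2 * p + 2))) := by
  have hx2 : x ^ (2*p+2) ≤ 1 := Real.rpow_le_one hx0.le hx1 (by linarith)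
  have hcoef : a ^ (2*p) ≤ b ^ (2*p) := Real.rpow_le_rpow ha.le hab.le (by linarith)
  have hD : ω * (1 - x ^ 2) + a ^ (2 * p) * (1 - x ^ (2 * p + 2))
      ≤ ω * (1 - x ^ 2) + b ^ (2 * p) * (1 - x ^ (2 * p + 2)) := by
    nlinarith
  rcases eq_or_lt_of_le hx1 with h | h
  · subst h; simp
  · have hpos : 0 < ω * (1 - x ^ 2) + a ^ (2 * p) * (1 - x ^ (2 * p + 2)) :=
      lt_of_lt_of_le (mul_pos (Real.rpow_pos_of_pos ha _) (by linarith))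
        (denom_lower p ω a hp hω ha hx0 hx1)
    exact one_div_le_one_div_of_le (Real.sqrt_pos.2 hpos) (Real.sqrt_le_sqrt hD)

private lemma ptwise_lt (p ω a b : ℝ) (hp : 0 < p) (hω : 0 ≤ ω) (ha : 0 < a) (hab : a < b)
    {x : ℝ} (hx0 : 0 < x) (hx1 : x < 1) :
    1 / Real.sqrt (ω * (1 - x ^ 2) + b ^ (2 * p) * (1 - x ^ (2 * p + 2)))
      < 1 / Real.sqrt (ω * (1 - x ^ 2) + a ^ (2 * p) * (1 - x ^ (2 * p + 2))) := by
  have hx2 : x ^ (2*p+2) < 1 := Real.rpow_lt_one hx0.le hx1 (by linarith)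
  have hcoef : a ^ (2*p) < b ^ (2*p) := Real.rpow_lt_rpow ha.le hab (by linarith)
  have h12 : (0:ℝ) ≤ 1 - x ^ 2 := by nlinarith
  have hD : ω * (1 - x ^ 2) + a ^ (2 * p) * (1 - x ^ (2 * p + 2))
      < ω * (1 - x ^ 2) + b ^ (2 * p) * (1 - x ^ (2 * p + 2)) := by
    have := mul_lt_mul_of_pos_right hcoef (by linarith : (0:ℝ) < 1 - x ^ (2*p+2))
    linarith
  have hpos : 0 < ω * (1 - x ^ 2) + a ^ (2 * p) * (1 - x ^ (2 * p + 2)) :=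
    lt_of_lt_of_le (mul_pos (Real.rpow_pos_of_pos ha _) (by linarith))
      (denom_lower p ω a hp hω ha hx0 hx1.le)
  exact one_div_lt_one_div_of_lt (Real.sqrt_pos.2 hpos) (Real.sqrt_lt_sqrt hpos.le hD)

/-- For every `p > 0`, `ω ≥ 0` and `u₀ > 0`, the half-period integral
`T(u₀) = 2∫₀¹ dx/√(ω(1-x²)+u₀^{2p}(1-x^{2p+2}))` is finite, and `T` is strictly
decreasing on `(0,∞)`. -/
theorem stmt3 (p ω : ℝ) (hp : 0 < p) (hω : 0 ≤ ω) :
    (∀ u₀ : ℝ, 0 < u₀ →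
      IntervalIntegrable
        (fun x : ℝ => 1 / Real.sqrt (ω * (1 - x ^ 2) + u₀ ^ (2 * p) * (1 - x ^ (2 * p + 2))))
        volume 0 1) ∧
    StrictAntiOn
      (fun u₀ : ℝ => 2 * ∫ x in (0:ℝ)..1,
        1 / Real.sqrt (ω * (1 - x ^ 2) + u₀ ^ (2 * p) * (1 - x ^ (2 * p + 2))))
      (Ioi 0) := by
  constructor
  · intro u₀ hu₀
    exact key_int p ω u₀ hp hω hu₀
  · intro a ha b hb hab
    simp only [mem_Ioi] at ha hb
    have hIa := (key_int p ω a hp hω ha).1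
    have hIb := (key_int p ω b hp hω hb).1
    set fa : ℝ → ℝ := fun x =>
      1 / Real.sqrt (ω * (1 - x ^ 2) + a ^ (2 * p) * (1 - x ^ (2 * p + 2))) with hfa
    set fb : ℝ → ℝ := fun x =>
      1 / Real.sqrt (ω * (1 - x ^ 2) + b ^ (2 * p) * (1 - x ^ (2 * p + 2))) with hfb
    have hnn : 0 ≤ᵐ[volume.restrict (Ioc (0:ℝ) 1)] fun x => fa x - fb x := by
      filter_upwards [ae_restrict_mem measurableSet_Ioc] with x hx
      show (0:ℝ) ≤ fa x - fb x
      have := ptwise_le p ω a b hp hω ha hab hx.1 hx.2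
      simp only [hfa, hfb]
      linarith
    have hpos : 0 < ∫ x in Ioc (0:ℝ) 1, (fa x - fb x) := by
      rw [setIntegral_pos_iff_support_of_nonneg_ae hnn (hIa.sub hIb)]
      have hsub : Ioo (0:ℝ) 1 ⊆ Function.support (fun x => fa x - fb x) ∩ Ioc 0 1 := by
        intro x hx
        refine ⟨?_, hx.1, hx.2.le⟩
        have := ptwise_lt p ω a b hp hω ha hab hx.1 hx.2
        simp only [Function.mem_support, hfa, hfb]
        intro h
        linarith [sub_eq_zero.mp h]
      calc (0:ENNReal) < volume (Ioo (0:ℝ) 1) := by simp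
        _ ≤ _ := measure_mono hsub
    have heq : ∫ x in Ioc (0:ℝ) 1, (fa x - fb x)
        = (∫ x in Ioc (0:ℝ) 1, fa x) - ∫ x in Ioc (0:ℝ) 1, fb x :=
      integral_sub hIa hIb
    rw [heq] at hpos
    show 2 * (∫ x in (0:ℝ)..1, fb x) < 2 * (∫ x in (0:ℝ)..1, fa x)
    rw [intervalIntegral.integral_of_le (zero_le_one' ℝ),
      intervalIntegral.integral_of_le (zero_le_one' ℝ)]
    linarith
end

section
/- For p > 0 and ω > 0, as u₀ → 0⁺ the half-period T(u₀) = 2∫₀¹ dx/√(ω(1-x²) + u₀^{2p}(1-x^{2p+2})) converges to π/√ω. -/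
open Real Filter Set MeasureTheory

lemma aux_integrable : IntervalIntegrable (fun x : ℝ => 1 / Real.sqrt (1 - x ^ 2))
    MeasureTheory.volume 0 1 := by
  have h1 : IntervalIntegrable (fun x : ℝ => x ^ (-(1/2) : ℝ)) MeasureTheory.volume 0 1 :=
    intervalIntegral.intervalIntegrable_rpow' (by norm_num)
  have h2 : IntervalIntegrable (fun x : ℝ => (1 - x) ^ (-(1/2) : ℝ))
      MeasureTheory.volume 0 1 := by
    have := (h1.comp_sub_left 1).symm
    simpa using this
  have hmeas : Measurable fun x : ℝ => 1 / Real.sqrt (1 - x ^ 2) :=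
    measurable_const.div ((measurable_const.sub (measurable_id.pow_const 2)).sqrt)
  refine h2.mono_fun hmeas.aestronglyMeasurable ?_
  · filter_upwards [MeasureTheory.ae_restrict_mem measurableSet_uIoc] with x hx
    rw [Set.uIoc_of_le (by norm_num : (0:ℝ) ≤ 1)] at hx
    have hx0 : 0 < x := hx.1
    have hx1 : x ≤ 1 := hx.2
    have hle : 1 - x ≤ 1 - x ^ 2 := by nlinarith
    have h1x : 0 ≤ 1 - x := by linarith
    have hnn : 0 ≤ 1 / Real.sqrt (1 - x ^ 2) := by positivity
    rw [Real.norm_of_nonneg hnn, Real.norm_of_nonneg (Real.rpow_nonneg h1x _),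
      show (-(1/2) : ℝ) = -(1/2) from rfl, Real.rpow_neg h1x, ← Real.sqrt_eq_rpow, ← one_div]
    rcases eq_or_lt_of_le h1x with h | h
    · have hz : (1:ℝ) - x ^ 2 = 0 := by nlinarith
      rw [hz, ← h]
    · have hs : Real.sqrt (1 - x) ≤ Real.sqrt (1 - x ^ 2) := Real.sqrt_le_sqrt hle
      exact one_div_le_one_div_of_le (Real.sqrt_pos.2 h) hs

lemma aux_value : ∫ x in (0:ℝ)..1, 1 / Real.sqrt (1 - x ^ 2) = π / 2 := by
  have h := intervalIntegral.integral_eq_sub_of_hasDeriv_right_of_le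
    (f := Real.arcsin) (f' := fun x => 1 / Real.sqrt (1 - x ^ 2))
    (by norm_num : (0:ℝ) ≤ 1)
    (Real.continuous_arcsin.continuousOn)
    (fun x hx => (Real.hasDerivAt_arcsin (by rintro rfl; exact absurd hx.1 (by norm_num))
      (ne_of_lt hx.2)).hasDerivWithinAt)
    aux_integrable
  rw [h, Real.arcsin_one, Real.arcsin_zero, sub_zero]

lemma aux_value_c (c : ℝ) (hc : 0 < c) :
    ∫ x in (0:ℝ)..1, 1 / Real.sqrt (c * (1 - x ^ 2)) = π / (2 * Real.sqrt c) := by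
  have heq : ∀ x : ℝ, 1 / Real.sqrt (c * (1 - x ^ 2))
      = (1 / Real.sqrt c) * (1 / Real.sqrt (1 - x ^ 2)) := by
    intro x
    rw [Real.sqrt_mul hc.le, one_div_mul_one_div]
  simp_rw [heq]
  rw [intervalIntegral.integral_const_mul, aux_value]
  have hsc : Real.sqrt c ≠ 0 := ne_of_gt (Real.sqrt_pos.2 hc)
  rw [div_mul_div_comm, one_mul, mul_comm (Real.sqrt c) 2]

/-- For `p > 0` and `ω > 0`, as `u₀ → 0⁺` the half-period
`T(u₀) = 2∫₀¹ dx/√(ω(1-x²)+u₀^{2p}(1-x^{2p+2}))` converges to `π/√ω`. -/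
theorem stmt4 (p ω : ℝ) (hp : 0 < p) (hω : 0 < ω) :
    Tendsto
      (fun u₀ : ℝ => 2 * ∫ x in (0:ℝ)..1,
        1 / Real.sqrt (ω * (1 - x ^ 2) + u₀ ^ (2 * p) * (1 - x ^ (2 * p + 2))))
      (nhdsWithin 0 (Ioi 0)) (nhds (π / Real.sqrt ω)) := by
  have hsω : 0 < Real.sqrt ω := Real.sqrt_pos.2 hω
  have key : Tendsto
      (fun u₀ : ℝ => ∫ x in (0:ℝ)..1,
        1 / Real.sqrt (ω * (1 - x ^ 2) + u₀ ^ (2 * p) * (1 - x ^ (2 * p + 2))))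
      (nhdsWithin 0 (Ioi 0))
      (nhds (∫ x in (0:ℝ)..1, 1 / Real.sqrt (ω * (1 - x ^ 2)))) := by
    apply intervalIntegral.tendsto_integral_filter_of_dominated_convergence
      (fun x => 1 / Real.sqrt (ω * (1 - x ^ 2)))
    · filter_upwards with u₀
      exact (measurable_const.div (((measurable_const.mul (measurable_const.sub
        (measurable_id.pow_const 2))).add (measurable_const.mul (measurable_const.sub
        ((Real.continuous_rpow_const (by linarith)).measurable)))).sqrt)).aestronglyMeasurable
    · filter_upwards [self_mem_nhdsWithin] with u₀ (hu₀ : 0 < u₀)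
      filter_upwards with x hx
      rw [Set.uIoc_of_le (by norm_num : (0:ℝ) ≤ 1)] at hx
      have hx0 : 0 < x := hx.1
      have hx1 : x ≤ 1 := hx.2
      have hpow : x ^ (2 * p + 2) ≤ 1 :=
        Real.rpow_le_one hx0.le hx1 (by linarith)
      have hterm : 0 ≤ u₀ ^ (2 * p) * (1 - x ^ (2 * p + 2)) :=
        mul_nonneg (Real.rpow_nonneg hu₀.le _) (by linarith)
      have hbase : 0 ≤ ω * (1 - x ^ 2) := mul_nonneg hω.le (by nlinarith)
      have hnn : 0 ≤ 1 / Real.sqrt (ω * (1 - x ^ 2) + u₀ ^ (2 * p) * (1 - x ^ (2 * p + 2))) := by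
        positivity
      rw [Real.norm_of_nonneg hnn]
      rcases eq_or_lt_of_le hbase with h | h
      · have hz : ω * (1 - x ^ 2) = 0 := h.symm
        have hx1' : x = 1 := by
          have : 1 - x ^ 2 = 0 := by
            rcases mul_eq_zero.1 hz with h' | h'
            · exact absurd h' (ne_of_gt hω)
            · exact h'
          nlinarith
        subst hx1'
        have h1r : (1:ℝ) ^ (2 * p + 2) = 1 := Real.one_rpow _
        simp [h1r]
      · have hs : Real.sqrt (ω * (1 - x ^ 2))
            ≤ Real.sqrt (ω * (1 - x ^ 2) + u₀ ^ (2 * p) * (1 - x ^ (2 * p + 2))) :=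
          Real.sqrt_le_sqrt (by linarith)
        exact one_div_le_one_div_of_le (Real.sqrt_pos.2 h) hs
    · -- bound integrable
      have := aux_value_c ω hω
      have heq : ∀ x : ℝ, 1 / Real.sqrt (ω * (1 - x ^ 2))
          = (1 / Real.sqrt ω) * (1 / Real.sqrt (1 - x ^ 2)) := by
        intro x
        rw [Real.sqrt_mul hω.le, one_div_mul_one_div]
      simp_rw [heq]
      exact aux_integrable.const_mul _
    · -- pointwise convergence
      have hne1 : ∀ᵐ x : ℝ, x ≠ (1:ℝ) := by
        rw [ae_iff]
        simp only [ne_eq, not_not, setOf_eq_eq_singleton]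
        exact Real.volume_singleton
      filter_upwards [hne1] with x hxne hx
      rw [Set.uIoc_of_le (by norm_num : (0:ℝ) ≤ 1)] at hx
      have hx0 : 0 < x := hx.1
      have hx1 : x < 1 := lt_of_le_of_ne hx.2 hxne
      have hrpow : Tendsto (fun u₀ : ℝ => u₀ ^ (2 * p)) (nhdsWithin 0 (Ioi 0)) (nhds 0) := by
        have hc : ContinuousAt (fun u₀ : ℝ => u₀ ^ (2 * p)) 0 := by
          apply Real.continuousAt_rpow_const
          right; linarith
        have := hc.tendsto
        rw [Real.zero_rpow (by positivity : (2 * p : ℝ) ≠ 0)] at this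
        exact this.mono_left nhdsWithin_le_nhds
      have hden : Tendsto
          (fun u₀ : ℝ => ω * (1 - x ^ 2) + u₀ ^ (2 * p) * (1 - x ^ (2 * p + 2)))
          (nhdsWithin 0 (Ioi 0)) (nhds (ω * (1 - x ^ 2))) := by
        have : Tendsto (fun u₀ : ℝ => u₀ ^ (2 * p) * (1 - x ^ (2 * p + 2)))
            (nhdsWithin 0 (Ioi 0)) (nhds 0) := by
          simpa using hrpow.mul_const (1 - x ^ (2 * p + 2))
        simpa using (tendsto_const_nhds (x := ω * (1 - x ^ 2))
          (f := nhdsWithin (0:ℝ) (Ioi 0))).add this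
      have hpos : 0 < ω * (1 - x ^ 2) := mul_pos hω (by nlinarith)
      have h1 : Tendsto (fun u₀ : ℝ =>
          Real.sqrt (ω * (1 - x ^ 2) + u₀ ^ (2 * p) * (1 - x ^ (2 * p + 2))))
          (nhdsWithin 0 (Ioi 0)) (nhds (Real.sqrt (ω * (1 - x ^ 2)))) :=
        (Real.continuous_sqrt.tendsto _).comp hden
      have h2 := h1.inv₀ (ne_of_gt (Real.sqrt_pos.2 hpos))
      simpa only [one_div] using h2
  have hval : (∫ x in (0:ℝ)..1, 1 / Real.sqrt (ω * (1 - x ^ 2)))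
      = π / (2 * Real.sqrt ω) := aux_value_c ω hω
  rw [hval] at key
  have := key.const_mul 2
  convert this using 2
  field_simp
end

section
/- For p > 0, as u₀ → ∞ the quantity u₀^p · T(u₀), where T(u₀) = 2∫₀¹ dx/√(ω(1-x²) + u₀^{2p}(1-x^{2p+2})) with ω ≥ 0 fixed, converges to 2∫₀¹ dx/√(1-x^{2p+2}), and this limit integral is finite. -/
open Real Filter MeasureTheory

/-- For `p > 0` and fixed `ω ≥ 0`, as `u₀ → ∞`,
`u₀^p · T(u₀) → 2∫₀¹ dx/√(1-x^{2p+2})`, and the limit integral is finite. -/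
theorem stmt5 (p ω : ℝ) (hp : 0 < p) (hω : 0 ≤ ω) :
    IntervalIntegrable (fun x : ℝ => 1 / Real.sqrt (1 - x ^ (2 * p + 2))) volume 0 1 ∧
    Tendsto
      (fun u₀ : ℝ => u₀ ^ p * (2 * ∫ x in (0:ℝ)..1,
        1 / Real.sqrt (ω * (1 - x ^ 2) + u₀ ^ (2 * p) * (1 - x ^ (2 * p + 2)))))
      atTop
      (nhds (2 * ∫ x in (0:ℝ)..1, 1 / Real.sqrt (1 - x ^ (2 * p + 2)))) := by
  have hq1 : (1:ℝ) ≤ 2 * p + 2 := by linarith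
  have hq0 : (0:ℝ) < 2 * p + 2 := by linarith
  -- measurability of the limit integrand
  have hfmeas : Measurable (fun x : ℝ => 1 / Real.sqrt (1 - x ^ (2 * p + 2))) := by
    fun_prop
  -- comparison: for x ∈ Ioc 0 1, f x ≤ 1/√(1-x)
  have hcomp : ∀ x ∈ Set.Ioc (0:ℝ) 1,
      1 / Real.sqrt (1 - x ^ (2 * p + 2)) ≤ 1 / Real.sqrt (1 - x) := by
    intro x hx
    rcases eq_or_lt_of_le hx.2 with h1 | h1
    · subst h1
      simp
    · have hxq : x ^ (2 * p + 2) ≤ x := by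
        calc x ^ (2 * p + 2) ≤ x ^ (1:ℝ) :=
              Real.rpow_le_rpow_of_exponent_ge hx.1 hx.2 hq1
          _ = x := Real.rpow_one x
      have h2 : (0:ℝ) < 1 - x := by linarith
      have h3 : 1 - x ≤ 1 - x ^ (2 * p + 2) := by linarith
      exact one_div_le_one_div_of_le (Real.sqrt_pos.2 h2) (Real.sqrt_le_sqrt h3)
  -- integrability
  have hint : IntervalIntegrable (fun x : ℝ => 1 / Real.sqrt (1 - x ^ (2 * p + 2)))
      volume 0 1 := by
    have h0 : IntervalIntegrable (fun x : ℝ => x ^ (-(1/2) : ℝ)) volume 0 1 :=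
      intervalIntegral.intervalIntegrable_rpow' (by norm_num)
    have h1 : IntervalIntegrable (fun x : ℝ => (1 - x) ^ (-(1/2) : ℝ)) volume 0 1 := by
      simpa using (h0.comp_sub_left 1).symm
    apply h1.mono_fun hfmeas.aestronglyMeasurable
    rw [Filter.EventuallyLE, ae_restrict_iff' measurableSet_uIoc]
    refine Eventually.of_forall fun x hx => ?_
    rw [Set.uIoc_of_le (by norm_num : (0:ℝ) ≤ 1)] at hx
    have h2 : (0:ℝ) ≤ 1 - x := by linarith [hx.2]
    have heq : (1 - x) ^ (-(1/2) : ℝ) = 1 / Real.sqrt (1 - x) := by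
      rw [Real.rpow_neg h2, Real.sqrt_eq_rpow, one_div]
      norm_num
    have hf0 : 0 ≤ 1 / Real.sqrt (1 - x ^ (2 * p + 2)) :=
      div_nonneg zero_le_one (Real.sqrt_nonneg _)
    rw [Real.norm_eq_abs, Real.norm_eq_abs, abs_of_nonneg hf0, heq,
      abs_of_nonneg (div_nonneg zero_le_one (Real.sqrt_nonneg _))]
    exact hcomp x hx
  refine ⟨hint, ?_⟩
  -- the rescaled integrand
  set F : ℝ → ℝ → ℝ := fun u₀ x =>
    1 / Real.sqrt (ω * u₀ ^ (-(2 * p)) * (1 - x ^ 2) + (1 - x ^ (2 * p + 2))) with hF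
  have key : Tendsto (fun u₀ => ∫ x in (0:ℝ)..1, F u₀ x) atTop
      (nhds (∫ x in (0:ℝ)..1, 1 / Real.sqrt (1 - x ^ (2 * p + 2)))) := by
    apply intervalIntegral.tendsto_integral_filter_of_dominated_convergence
      (fun x => 1 / Real.sqrt (1 - x ^ (2 * p + 2)))
    · refine Eventually.of_forall fun u₀ => Measurable.aestronglyMeasurable ?_
      fun_prop
    · filter_upwards [eventually_ge_atTop (1:ℝ)] with u₀ hu₀
      refine Eventually.of_forall fun x hx => ?_
      rw [Set.uIoc_of_le (by norm_num : (0:ℝ) ≤ 1)] at hx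
      have hF0 : 0 ≤ F u₀ x := div_nonneg zero_le_one (Real.sqrt_nonneg _)
      rw [Real.norm_eq_abs, abs_of_nonneg hF0]
      rcases eq_or_lt_of_le hx.2 with h1 | h1
      · subst h1
        simp [hF]
      · have hd : 0 < 1 - x ^ (2 * p + 2) := by
          have := Real.rpow_lt_one hx.1.le h1 hq0
          linarith
        have hε : 0 ≤ ω * u₀ ^ (-(2 * p)) * (1 - x ^ 2) := by
          apply mul_nonneg (mul_nonneg hω (Real.rpow_nonneg (by linarith) _))
          nlinarith [hx.1, hx.2]
        exact one_div_le_one_div_of_le (Real.sqrt_pos.2 hd)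
          (Real.sqrt_le_sqrt (by linarith))
    · exact hint
    · refine Eventually.of_forall fun x hx => ?_
      rw [Set.uIoc_of_le (by norm_num : (0:ℝ) ≤ 1)] at hx
      rcases eq_or_lt_of_le hx.2 with h1 | h1
      · subst h1
        simp [hF]
      · have hd : 0 < 1 - x ^ (2 * p + 2) := by
          have := Real.rpow_lt_one hx.1.le h1 hq0
          linarith
        have h2 : Tendsto (fun u₀ : ℝ => ω * u₀ ^ (-(2 * p)) * (1 - x ^ 2)
            + (1 - x ^ (2 * p + 2))) atTop (nhds (1 - x ^ (2 * p + 2))) := by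
          have := ((tendsto_rpow_neg_atTop (by linarith : (0:ℝ) < 2 * p)).const_mul ω).mul_const
            (1 - x ^ 2)
          simpa using this.add_const (1 - x ^ (2 * p + 2))
        have h3 := (Real.continuous_sqrt.tendsto _).comp h2
        have h4 : Real.sqrt (1 - x ^ (2 * p + 2)) ≠ 0 :=
          (Real.sqrt_pos.2 hd).ne'
        exact (tendsto_const_nhds.div h3 h4)
  have key2 := key.const_mul 2
  apply Tendsto.congr' _ key2
  filter_upwards [eventually_ge_atTop (1:ℝ)] with u₀ hu₀
  have hu0 : (0:ℝ) < u₀ := by linarith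
  have hup : (0:ℝ) < u₀ ^ p := Real.rpow_pos_of_pos hu0 _
  have hu2p : (0:ℝ) < u₀ ^ (2 * p) := Real.rpow_pos_of_pos hu0 _
  have hsq : Real.sqrt (u₀ ^ (2 * p)) = u₀ ^ p := by
    rw [show (2:ℝ) * p = p * 2 by ring, Real.rpow_mul hu0.le,
      show ((2:ℝ)) = ((2:ℕ):ℝ) by norm_num, Real.rpow_natCast]
    exact Real.sqrt_sq hup.le
  have heq : ∀ x ∈ Set.uIcc (0:ℝ) 1,
      F u₀ x = u₀ ^ p *
        (1 / Real.sqrt (ω * (1 - x ^ 2) + u₀ ^ (2 * p) * (1 - x ^ (2 * p + 2)))) := by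
    intro x hx
    rw [Set.uIcc_of_le (by norm_num : (0:ℝ) ≤ 1)] at hx
    have hx2 : x ^ (2 * p + 2) ≤ 1 := Real.rpow_le_one hx.1 hx.2 hq0.le
    have hA : 0 ≤ ω * (1 - x ^ 2) + u₀ ^ (2 * p) * (1 - x ^ (2 * p + 2)) := by
      have : x ^ 2 ≤ 1 := by nlinarith [hx.1, hx.2]
      have h1 : 0 ≤ ω * (1 - x ^ 2) := mul_nonneg hω (by linarith)
      have h2 : 0 ≤ u₀ ^ (2 * p) * (1 - x ^ (2 * p + 2)) :=
        mul_nonneg hu2p.le (by linarith)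
      linarith
    have harg : ω * u₀ ^ (-(2 * p)) * (1 - x ^ 2) + (1 - x ^ (2 * p + 2))
        = (ω * (1 - x ^ 2) + u₀ ^ (2 * p) * (1 - x ^ (2 * p + 2))) / u₀ ^ (2 * p) := by
      rw [Real.rpow_neg hu0.le]
      field_simp
    show (1 : ℝ) / Real.sqrt (ω * u₀ ^ (-(2 * p)) * (1 - x ^ 2) + (1 - x ^ (2 * p + 2))) = _
    rw [harg, Real.sqrt_div hA, hsq, one_div_div, div_eq_mul_one_div]
  have hI : (∫ x in (0:ℝ)..1, F u₀ x)
      = ∫ x in (0:ℝ)..1, u₀ ^ p *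
        (1 / Real.sqrt (ω * (1 - x ^ 2) + u₀ ^ (2 * p) * (1 - x ^ (2 * p + 2)))) :=
    intervalIntegral.integral_congr heq
  rw [hI, intervalIntegral.integral_const_mul]
  ring
end

section
/- Let p > 0, ω ∈ ℝ, and let u be a C² solution of -u'' - ωu - (p+1)|u|^{2p}u = 0 on an interval I. Then the function ψ(x) = u'(x) + p·u(x)·∫₀ˣ |u(y)|^{2p} dy satisfies the linearized equation -ψ'' - ωψ - (p+1)|u|^{2p}ψ = 0 on I. -/
open Real Set


/-- If `u` solves `-u'' - ωu - (p+1)|u|^{2p}u = 0` on an interval containing `0`, then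
`ψ(x) = u'(x) + p·u(x)·∫₀ˣ |u(y)|^{2p} dy` satisfies the linearized equation
`-ψ'' - ωψ - (p+1)|u|^{2p}ψ = 0` there. Here `|u|^{2p} = (u²)^p`. -/
theorem stmt11 (p ω a b : ℝ) (hp : 0 < p) (hab : (0:ℝ) ∈ Ioo a b)
    (u : ℝ → ℝ) (hu : ContDiff ℝ (⊤ : ℕ∞) u) (hpos : ∀ x ∈ Ioo a b, u x ≠ 0)
    (heq : ∀ x ∈ Ioo a b,
      -(deriv (deriv u) x) - ω * u x - (p + 1) * ((u x) ^ 2) ^ p * u x = 0) :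
    ∀ x ∈ Ioo a b,
      -(deriv (deriv (fun x : ℝ =>
          deriv u x + p * u x * ∫ y in (0:ℝ)..x, ((u y) ^ 2) ^ p)) x)
        - ω * (deriv u x + p * u x * ∫ y in (0:ℝ)..x, ((u y) ^ 2) ^ p)
        - (p + 1) * ((u x) ^ 2) ^ p
          * (deriv u x + p * u x * ∫ y in (0:ℝ)..x, ((u y) ^ 2) ^ p) = 0 := by
  intro x hx
  have hux : u x ≠ 0 := hpos x hx
  -- basic differentiability facts
  have hu' : ContDiff ℝ (⊤ : ℕ∞) u := hu.of_le (by simp)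
  have h1i : ((⊤ : ℕ∞) : WithTop ℕ∞) ≠ 0 := by simp
  have hu1 : ContDiff ℝ (⊤ : ℕ∞) (deriv u) := (contDiff_infty_iff_deriv.mp hu').2
  have hu2 : ContDiff ℝ (⊤ : ℕ∞) (deriv (deriv u)) := (contDiff_infty_iff_deriv.mp hu1).2
  have hud : ∀ y : ℝ, HasDerivAt u (deriv u y) y := fun y =>
    ((hu'.differentiable h1i) y).hasDerivAt
  have hud1 : ∀ y : ℝ, HasDerivAt (deriv u) (deriv (deriv u) y) y := fun y =>
    ((hu1.differentiable h1i) y).hasDerivAt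
  have hud2 : ∀ y : ℝ, HasDerivAt (deriv (deriv u)) (deriv (deriv (deriv u)) y) y := fun y =>
    ((hu2.differentiable h1i) y).hasDerivAt
  -- the nonlinearity g
  have hgc : Continuous (fun y => ((u y) ^ 2) ^ p) :=
    (Real.continuous_rpow_const hp.le).comp (hu.continuous.pow 2)
  -- derivative of g at points where u ≠ 0
  have hgd : ∀ y : ℝ, u y ≠ 0 →
      HasDerivAt (fun y => ((u y) ^ 2) ^ p)
        (p * ((u y) ^ 2) ^ (p - 1) * (2 * u y * deriv u y)) y := by
    intro y hy
    have h1 : HasDerivAt (fun t : ℝ => t ^ p) (p * ((u y) ^ 2) ^ (p - 1)) ((u y) ^ 2) :=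
      Real.hasDerivAt_rpow_const (Or.inl (pow_ne_zero 2 hy))
    have h2 : HasDerivAt (fun z : ℝ => (u z) ^ 2) (2 * u y * deriv u y) y := by
      have := (hud y).pow 2
      simp only [mul_comm, mul_assoc] at this ⊢
      exact this.congr_deriv (by ring)
    exact h1.comp y h2
  -- the antiderivative F
  set F : ℝ → ℝ := fun x => ∫ y in (0:ℝ)..x, ((u y) ^ 2) ^ p with hFdef
  have hFd : ∀ y : ℝ, HasDerivAt F (((u y) ^ 2) ^ p) y := fun y =>
    (hgc.integral_hasStrictDerivAt 0 y).hasDerivAt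
  -- ψ and its first derivative
  have hψd : ∀ y : ℝ,
      HasDerivAt (fun x : ℝ => deriv u x + p * u x * F x)
        (deriv (deriv u) y + p * (deriv u y * F y + u y * ((u y) ^ 2) ^ p)) y := by
    intro y
    have := (hud1 y).add (((hud y).mul (hFd y)).const_mul p)
    simp only [mul_assoc] at this ⊢
    exact this
  have hderivψ : deriv (fun x : ℝ => deriv u x + p * u x * F x)
      = fun y => deriv (deriv u) y + p * (deriv u y * F y + u y * ((u y) ^ 2) ^ p) :=
    funext fun y => (hψd y).deriv
  -- second derivative of ψ at x
  have hφd : HasDerivAt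
      (fun y => deriv (deriv u) y + p * (deriv u y * F y + u y * ((u y) ^ 2) ^ p))
      (deriv (deriv (deriv u)) x +
        p * ((deriv (deriv u) x * F x + deriv u x * ((u x) ^ 2) ^ p) +
          (deriv u x * ((u x) ^ 2) ^ p
            + u x * (p * ((u x) ^ 2) ^ (p - 1) * (2 * u x * deriv u x))))) x :=
    (hud2 x).add
      ((((hud1 x).mul (hFd x)).add ((hud x).mul (hgd x hux))).const_mul p)
  have hψ2 : deriv (deriv (fun x : ℝ => deriv u x + p * u x * F x)) x
      = deriv (deriv (deriv u)) x +
        p * ((deriv (deriv u) x * F x + deriv u x * ((u x) ^ 2) ^ p) +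
          (deriv u x * ((u x) ^ 2) ^ p
            + u x * (p * ((u x) ^ 2) ^ (p - 1) * (2 * u x * deriv u x)))) := by
    rw [hderivψ]; exact hφd.deriv
  -- u'' from the equation, on a neighborhood of x
  have heq' : ∀ y ∈ Ioo a b,
      deriv (deriv u) y = -(ω * u y) - (p + 1) * ((u y) ^ 2) ^ p * u y := by
    intro y hy; have := heq y hy; linarith
  -- third derivative of u at x
  have hrhs : HasDerivAt (fun y => -(ω * u y) - (p + 1) * ((u y) ^ 2) ^ p * u y)
      (-(ω * deriv u x) - (p + 1) *
        ((p * ((u x) ^ 2) ^ (p - 1) * (2 * u x * deriv u x)) * u x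
          + ((u x) ^ 2) ^ p * deriv u x)) x := by
    have := (((hud x).const_mul ω).neg).sub
      (((hgd x hux).mul (hud x)).const_mul (p + 1))
    simp only [mul_assoc] at this ⊢
    exact this
  have hu3 : deriv (deriv (deriv u)) x =
      -(ω * deriv u x) - (p + 1) *
        ((p * ((u x) ^ 2) ^ (p - 1) * (2 * u x * deriv u x)) * u x
          + ((u x) ^ 2) ^ p * deriv u x) := by
    have hev : deriv (deriv u) =ᶠ[nhds x]
        fun y => -(ω * u y) - (p + 1) * ((u y) ^ 2) ^ p * u y := by
      filter_upwards [isOpen_Ioo.mem_nhds hx] with y hy using heq' y hy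
    rw [hev.deriv_eq]
    exact hrhs.deriv
  -- key rpow identity
  have h2pos : (0:ℝ) < (u x) ^ 2 := pow_pos (abs_pos.mpr hux) 2 |>.trans_eq (sq_abs _)
  have hBA : ((u x) ^ 2) ^ (p - 1) * (u x) ^ 2 = ((u x) ^ 2) ^ p := by
    calc ((u x) ^ 2) ^ (p - 1) * (u x) ^ 2
        = ((u x) ^ 2) ^ (p - 1) * ((u x) ^ 2) ^ (1:ℝ) := by rw [Real.rpow_one]
      _ = ((u x) ^ 2) ^ (p - 1 + 1) := (Real.rpow_add h2pos _ _).symm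
      _ = ((u x) ^ 2) ^ p := by rw [sub_add_cancel]
  -- put everything together
  show -(deriv (deriv (fun x : ℝ => deriv u x + p * u x * F x)) x)
        - ω * (deriv u x + p * u x * F x)
        - (p + 1) * ((u x) ^ 2) ^ p * (deriv u x + p * u x * F x) = 0
  rw [hψ2, hu3, heq' x hx]
  linear_combination (2 * p * deriv u x) * hBA
end

section
/- Let p ∈ (0,2) and let M(ε) = 2Lε^{2/p}(1 + O(ε²)) + ε^{2/p - 1}·C(ε), where C(ε) = ‖φ₀‖²_{L²(a(ε),∞)} with a(ε) = 2Lε + O(ε³) and φ₀(z) = sech(pz)^{1/p}. Then for all sufficiently small ε > 0, M'(ε) > 0. -/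
open Real Set MeasureTheory

noncomputable def gfun (p z : ℝ) : ℝ := ((1 / Real.cosh (p * z)) ^ (1 / p)) ^ 2

noncomputable def Ffun (p t : ℝ) : ℝ := ∫ z in Ioi t, gfun p z

lemma gfun_cont (p : ℝ) : Continuous (gfun p) := by
  apply Continuous.pow
  apply Continuous.rpow_const
  · exact continuous_const.div (Real.continuous_cosh.comp (continuous_const.mul continuous_id))
      (fun x => (Real.cosh_pos _).ne')
  · intro x
    left
    positivity

lemma gfun_pos (p : ℝ) (hp : 0 < p) (z : ℝ) : 0 < gfun p z := by
  unfold gfun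
  have h1 : 0 < 1 / Real.cosh (p * z) := by positivity
  positivity

lemma gfun_le_one (p : ℝ) (hp : 0 < p) (z : ℝ) : gfun p z ≤ 1 := by
  unfold gfun
  have h1 : 1 / Real.cosh (p * z) ≤ 1 := by
    rw [div_le_one (Real.cosh_pos _)]; exact Real.one_le_cosh _
  have h0 : 0 ≤ 1 / Real.cosh (p * z) := by positivity
  have h2 : (1 / Real.cosh (p * z)) ^ (1 / p) ≤ 1 :=
    Real.rpow_le_one h0 h1 (by positivity)
  have h3 : 0 ≤ (1 / Real.cosh (p * z)) ^ (1 / p) := Real.rpow_nonneg h0 _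
  nlinarith

lemma gfun_bound (p : ℝ) (hp : 0 < p) (z : ℝ) :
    gfun p z ≤ (2 : ℝ) ^ (2 / p) * Real.exp (-2 * z) := by
  have hcosh : Real.exp (p * z) / 2 ≤ Real.cosh (p * z) := by
    rw [Real.cosh_eq]
    have := Real.exp_pos (-(p * z))
    linarith
  have h1 : 1 / Real.cosh (p * z) ≤ 2 * Real.exp (-(p * z)) := by
    rw [div_le_iff₀ (Real.cosh_pos _)]
    have h2 : Real.exp (-(p*z)) * (Real.exp (p*z) / 2) ≤ Real.exp (-(p*z)) * Real.cosh (p*z) :=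
      mul_le_mul_of_nonneg_left hcosh (Real.exp_pos _).le
    have key : Real.exp (-(p*z)) * Real.exp (p*z) = 1 := by
      rw [← Real.exp_add]; simp
    nlinarith [key, h2]
  have h0 : 0 ≤ 1 / Real.cosh (p * z) := by positivity
  have h2 : (1 / Real.cosh (p * z)) ^ (1 / p) ≤ (2 * Real.exp (-(p * z))) ^ (1 / p) :=
    Real.rpow_le_rpow h0 h1 (by positivity)
  have h3 : (2 * Real.exp (-(p * z))) ^ (1 / p)
      = 2 ^ (1 / p) * Real.exp (-z) := by
    rw [Real.mul_rpow (by norm_num) (Real.exp_pos _).le]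
    congr 1
    rw [Real.rpow_def_of_pos (Real.exp_pos _), Real.log_exp]
    congr 1
    field_simp
  have h4 : (1 / Real.cosh (p * z)) ^ (1 / p) ≤ 2 ^ (1 / p) * Real.exp (-z) := h3 ▸ h2
  have h5 : 0 ≤ (1 / Real.cosh (p * z)) ^ (1 / p) := Real.rpow_nonneg h0 _
  have h6 : gfun p z ≤ (2 ^ (1 / p) * Real.exp (-z)) ^ 2 := by
    unfold gfun
    exact pow_le_pow_left₀ h5 h4 2
  refine h6.trans (le_of_eq ?_)
  rw [mul_pow, ← Real.exp_nat_mul]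
  rw [← Real.rpow_natCast (2 ^ (1/p)) 2, ← Real.rpow_mul (by norm_num)]
  congr 1
  · congr 1; ring
  · congr 1; push_cast; ring

lemma gfun_integrableOn (p : ℝ) (hp : 0 < p) (t : ℝ) :
    IntegrableOn (gfun p) (Ioi t) := by
  apply Integrable.mono' (g := fun z => (2 : ℝ) ^ (2 / p) * Real.exp (-2 * z))
  · exact (exp_neg_integrableOn_Ioi t (by norm_num : (0:ℝ) < 2)).const_mul _
  · exact ((gfun_cont p).aestronglyMeasurable).restrict
  · filter_upwards with z
    rw [Real.norm_eq_abs, abs_of_nonneg (gfun_pos p hp z).le]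
    exact gfun_bound p hp z

lemma Ffun_split (p : ℝ) (hp : 0 < p) {t u : ℝ} (h : t ≤ u) :
    Ffun p t = (∫ z in Ioc t u, gfun p z) + Ffun p u := by
  unfold Ffun
  rw [← setIntegral_union (Ioc_disjoint_Ioi le_rfl) measurableSet_Ioi
      ((gfun_integrableOn p hp t).mono_set Ioc_subset_Ioi_self)
      (gfun_integrableOn p hp u), Ioc_union_Ioi_eq_Ioi h]

lemma Ffun_anti (p : ℝ) (hp : 0 < p) {t u : ℝ} (h : t ≤ u) :
    Ffun p u ≤ Ffun p t := by
  rw [Ffun_split p hp h]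
  have : 0 ≤ ∫ z in Ioc t u, gfun p z :=
    setIntegral_nonneg measurableSet_Ioc (fun z _ => (gfun_pos p hp z).le)
  linarith

lemma Ffun_pos (p : ℝ) (hp : 0 < p) (t : ℝ) : 0 < Ffun p t := by
  unfold Ffun
  rw [setIntegral_pos_iff_support_of_nonneg_ae
    (Filter.Eventually.of_forall (fun z => (gfun_pos p hp z).le))
    (gfun_integrableOn p hp t)]
  have hsupp : Function.support (gfun p) = univ := by
    ext z; simp [Function.mem_support, (gfun_pos p hp z).ne']
  rw [hsupp, univ_inter]
  simp [Real.volume_Ioi]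

lemma Ffun_hasDerivAt (p : ℝ) (hp : 0 < p) (t : ℝ) :
    HasDerivAt (Ffun p) (-(gfun p t)) t := by
  set c := t - 1 with hc
  have hG : HasDerivAt (fun u => ∫ x in c..u, gfun p x) (gfun p t) t :=
    intervalIntegral.integral_hasDerivAt_right ((gfun_cont p).intervalIntegrable c t)
      ((gfun_cont p).stronglyMeasurableAtFilter _ _) (gfun_cont p).continuousAt
  have hG' : HasDerivAt (fun u => Ffun p c - ∫ x in c..u, gfun p x) (-(gfun p t)) t :=
    hG.const_sub (Ffun p c)
  apply hG'.congr_of_eventuallyEq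
  have hnb : Ioi c ∈ nhds t := Ioi_mem_nhds (by rw [hc]; linarith)
  filter_upwards [hnb] with u hu
  have hcu : c ≤ u := le_of_lt hu
  rw [intervalIntegral.integral_of_le hcu]
  have := Ffun_split p hp hcu
  linarith

set_option maxHeartbeats 2000000

/-- Slope condition along the primary branch for `p ∈ (0,2)`: the mass
`M(ε) = 2Lε^{2/p}(1 + R(ε)) + ε^{2/p-1}‖φ₀‖²_{L²(a(ε),∞)}`, with `R(ε) = O(ε²)` and
`a(ε) = 2Lε + O(ε³)`, satisfies `M'(ε) > 0` for all sufficiently small `ε > 0`. -/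
theorem stmt17 (p L : ℝ) (hp : p ∈ Ioo (0:ℝ) 2) (hL : 0 < L)
    (R a : ℝ → ℝ) (hRd : Differentiable ℝ R) (had : Differentiable ℝ a)
    (cR : ℝ) (hR : ∀ ε ∈ Ioo (0:ℝ) 1, |R ε| ≤ cR * ε ^ 2 ∧ |deriv R ε| ≤ cR * ε)
    (ca : ℝ) (ha : ∀ ε ∈ Ioo (0:ℝ) 1, |a ε - 2 * L * ε| ≤ ca * ε ^ 3 ∧
      |deriv a ε - 2 * L| ≤ ca * ε ^ 2) :
    ∃ ε₀ > (0:ℝ), ∀ ε ∈ Ioo 0 ε₀,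
      0 < deriv (fun ε : ℝ =>
        2 * L * ε ^ (2 / p) * (1 + R ε)
          + ε ^ (2 / p - 1) * ∫ z in Ioi (a ε), ((1 / Real.cosh (p * z)) ^ (1 / p)) ^ 2) ε := by
  obtain ⟨hp0, hp2⟩ := hp
  set q : ℝ := 2 / p with hqdef
  have hq1 : 1 < q := (one_lt_div hp0).2 hp2
  have hq0 : 0 < q := by linarith
  -- nonnegativity of the constants
  have hcR0 : 0 ≤ cR := by
    have := (hR (1/2) (by norm_num)).1
    nlinarith [abs_nonneg (R (1/2))]
  have hca0 : 0 ≤ ca := by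
    have := (ha (1/2) (by norm_num)).1
    nlinarith [abs_nonneg (a (1/2) - 2 * L * (1/2))]
  set K : ℝ := Ffun p 1 with hKdef
  have hK : 0 < K := Ffun_pos p hp0 1
  set B : ℝ := 2 * L * q * (1 + cR) + 2 * L * cR + (2 * L + ca) with hBdef
  have hB0 : 0 ≤ B := by positivity
  refine ⟨min (min 1 (1 / (2 * L + ca + 1))) ((q - 1) * K / (B + 1)), ?_, ?_⟩
  · apply lt_min (lt_min one_pos (by positivity))
    have : 0 < (q - 1) * K := mul_pos (by linarith) hK
    positivity
  intro ε hε
  obtain ⟨hε0, hεlt⟩ := hε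
  have hε1 : ε < 1 := lt_of_lt_of_le hεlt (le_trans (min_le_left _ _) (min_le_left _ _))
  have hεinv : ε < 1 / (2 * L + ca + 1) :=
    lt_of_lt_of_le hεlt (le_trans (min_le_left _ _) (min_le_right _ _))
  have hεK : ε < (q - 1) * K / (B + 1) := lt_of_lt_of_le hεlt (min_le_right _ _)
  have hεne : ε ≠ 0 := hε0.ne'
  have hmem : ε ∈ Ioo (0:ℝ) 1 := ⟨hε0, hε1⟩
  obtain ⟨hR1, hR2⟩ := hR ε hmem
  obtain ⟨ha1, ha2⟩ := ha ε hmem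
  -- bounds on a ε
  have haε_lt_one : a ε < 1 := by
    have h1 : a ε ≤ 2 * L * ε + ca * ε ^ 3 := by
      have := abs_le.mp ha1; linarith [this.2]
    have he3 : ε ^ 3 ≤ ε := by nlinarith
    have h2 : ca * ε ^ 3 ≤ ca * ε := mul_le_mul_of_nonneg_left he3 hca0
    have h3 : a ε ≤ (2 * L + ca) * ε := by nlinarith
    have h4 : (2 * L + ca) * ε < (2 * L + ca + 1) * ε := by nlinarith
    have h5 : (2 * L + ca + 1) * ε < 1 := by
      rw [← lt_div_iff₀' (by positivity)] at *
      exact hεinv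
    linarith
  have haε_gt : -1 < a ε := by
    have h1 : 2 * L * ε - ca * ε ^ 3 ≤ a ε := by
      have := abs_le.mp ha1; linarith [this.1]
    have he3 : ε ^ 3 ≤ ε := by nlinarith
    have h2 : ca * ε ^ 3 ≤ ca * ε := mul_le_mul_of_nonneg_left he3 hca0
    have h5 : (2 * L + ca + 1) * ε < 1 := by
      rw [← lt_div_iff₀' (by positivity)] at *
      exact hεinv
    nlinarith
  -- derivative computation
  have h1 : HasDerivAt (fun x : ℝ => x ^ q) (q * ε ^ (q - 1)) ε :=
    Real.hasDerivAt_rpow_const (Or.inl hεne)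
  have h2 : HasDerivAt (fun x : ℝ => 2 * L * x ^ q) (2 * L * (q * ε ^ (q - 1))) ε :=
    h1.const_mul _
  have h3 : HasDerivAt (fun x => 1 + R x) (deriv R ε) ε :=
    ((hRd ε).hasDerivAt).const_add 1
  have hA : HasDerivAt (fun x => 2 * L * x ^ q * (1 + R x))
      (2 * L * (q * ε ^ (q - 1)) * (1 + R ε) + 2 * L * ε ^ q * deriv R ε) ε := h2.mul h3
  have h4 : HasDerivAt (fun x : ℝ => x ^ (q - 1)) ((q - 1) * ε ^ (q - 1 - 1)) ε :=
    Real.hasDerivAt_rpow_const (Or.inl hεne)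
  have ha' : HasDerivAt a (deriv a ε) ε := (had ε).hasDerivAt
  have hF : HasDerivAt (Ffun p) (-(gfun p (a ε))) (a ε) := Ffun_hasDerivAt p hp0 (a ε)
  have hcomp : HasDerivAt (fun x => Ffun p (a x)) (-(gfun p (a ε)) * deriv a ε) ε :=
    hF.comp ε ha'
  have hB2 : HasDerivAt (fun x : ℝ => x ^ (q - 1) * Ffun p (a x))
      ((q - 1) * ε ^ (q - 1 - 1) * Ffun p (a ε)
        + ε ^ (q - 1) * (-(gfun p (a ε)) * deriv a ε)) ε := h4.mul hcomp
  have hM : HasDerivAt (fun x : ℝ => 2 * L * x ^ q * (1 + R x) + x ^ (q - 1) * Ffun p (a x))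
      (2 * L * (q * ε ^ (q - 1)) * (1 + R ε) + 2 * L * ε ^ q * deriv R ε
        + ((q - 1) * ε ^ (q - 1 - 1) * Ffun p (a ε)
          + ε ^ (q - 1) * (-(gfun p (a ε)) * deriv a ε))) ε := hA.add hB2
  have hfeq : (fun ε : ℝ =>
        2 * L * ε ^ q * (1 + R ε)
          + ε ^ (q - 1) * ∫ z in Ioi (a ε), ((1 / Real.cosh (p * z)) ^ (1 / p)) ^ 2)
      = (fun x : ℝ => 2 * L * x ^ q * (1 + R x) + x ^ (q - 1) * Ffun p (a x)) := by
    unfold Ffun gfun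
    rfl
  rw [hfeq, hM.deriv]
  -- rewrite powers in terms of s := ε ^ (q - 2)
  set s : ℝ := ε ^ (q - 2) with hsdef
  have hs0 : 0 < s := Real.rpow_pos_of_pos hε0 _
  have e0 : q - 1 - 1 = q - 2 := by ring
  have e1 : ε ^ (q - 1) = s * ε := by
    rw [hsdef, ← Real.rpow_add_one hεne]
    congr 1; ring
  have e2 : ε ^ q = s * ε * ε := by
    rw [hsdef, ← Real.rpow_add_one hεne, ← Real.rpow_add_one hεne]
    congr 1; ring
  rw [e0, e1, e2]
  -- now positivity
  set g : ℝ := gfun p (a ε) with hgdef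
  have hg0 : 0 ≤ g := (gfun_pos p hp0 (a ε)).le
  have hg1 : g ≤ 1 := gfun_le_one p hp0 (a ε)
  have hFa : K ≤ Ffun p (a ε) := Ffun_anti p hp0 haε_lt_one.le
  have hRεa := abs_le.mp hR1
  have hRεb := abs_le.mp hR2
  have haεb := abs_le.mp ha2
  have hεsq : ε ^ 2 ≤ 1 := by nlinarith
  have hcRe1 : cR * ε ^ 2 ≤ cR := by nlinarith [mul_le_mul_of_nonneg_left hεsq hcR0]
  have hcRe2 : cR * ε ≤ cR := by nlinarith [mul_le_mul_of_nonneg_left hε1.le hcR0]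
  have hcae : ca * ε ^ 2 ≤ ca := by nlinarith [mul_le_mul_of_nonneg_left hεsq hca0]
  have hRεa1 : -cR ≤ R ε ∧ R ε ≤ cR := by
    constructor <;> linarith [hRεa.1, hRεa.2]
  have hRεb1 : -cR ≤ deriv R ε ∧ deriv R ε ≤ cR := by
    constructor <;> linarith [hRεb.1, hRεb.2]
  have ha'b : -(2 * L + ca) ≤ deriv a ε ∧ deriv a ε ≤ 2 * L + ca := by
    constructor <;> linarith [haεb.1, haεb.2]
  -- E bound
  have hga' : g * deriv a ε ≤ 2 * L + ca := by
    rcases le_or_gt (deriv a ε) 0 with h | h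
    · have h5 : g * deriv a ε ≤ 0 := mul_nonpos_of_nonneg_of_nonpos hg0 h
      linarith
    · have h5 : g * deriv a ε ≤ deriv a ε := mul_le_of_le_one_left h.le hg1
      linarith [ha'b.2]
  have hE : -B ≤ 2 * L * q * (1 + R ε) + 2 * L * ε * deriv R ε - g * deriv a ε := by
    have t1 : 2 * L * q * (1 - cR) ≤ 2 * L * q * (1 + R ε) :=
      mul_le_mul_of_nonneg_left (by linarith [hRεa1.1]) (by positivity)
    have u1 : -cR ≤ ε * deriv R ε := by
      nlinarith [mul_le_mul_of_nonneg_left hRεb.1 hε0.le, hcRe1]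
    have t2 : -(2 * L * cR) ≤ 2 * L * ε * deriv R ε := by
      nlinarith [mul_le_mul_of_nonneg_left u1 hL.le]
    rw [hBdef]
    nlinarith
  -- final inequality
  have hεB1 : ε * (B + 1) < (q - 1) * K := by
    rw [lt_div_iff₀ (by positivity)] at hεK
    linarith
  have goal_eq : 2 * L * (q * (s * ε)) * (1 + R ε) + 2 * L * (s * ε * ε) * deriv R ε
        + ((q - 1) * s * Ffun p (a ε) + s * ε * (-g * deriv a ε))
      = s * ((q - 1) * Ffun p (a ε)
          + ε * (2 * L * q * (1 + R ε) + 2 * L * ε * deriv R ε - g * deriv a ε)) := by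
    ring
  rw [goal_eq]
  apply mul_pos hs0
  have hfin1 : (q - 1) * K ≤ (q - 1) * Ffun p (a ε) := by nlinarith
  have hfin2 : -(ε * B) ≤ ε * (2 * L * q * (1 + R ε) + 2 * L * ε * deriv R ε - g * deriv a ε) := by
    nlinarith
  nlinarith
end

section
/- Let u, v be positive C² functions (u on [-L,L], v on [L,∞), v and v' decaying at infinity) solving -u'' + ε²u - (p+1)u^{2p+1} = 0 and -v'' + ε²v - (p+1)v^{2p+1} = 0, satisfying u(L) = u(-L) = v(L) and u'(L) - u'(-L) = v'(L). If (U,V) = (a·u, b·v) with a ∈ C¹([-L,L]), b ∈ C¹([L,∞)) satisfies the same Kirchhoff conditions and a·u, b·v decay appropriately, then the quadratic form E(U,V) = ∫_{-L}^L[(U')² + ε²U² - (p+1)u^{2p}U²] + ∫_L^∞[(V')² + ε²V² - (p+1)v^{2p}V²] equals ∫_{-L}^L (a')²u² + ∫_L^∞ (b')²v² ≥ 0. -/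
open Real Filter MeasureTheory Set Topology

/-!
Ground-state substitution: if `f'' = q f` and `U = a f`, then pointwise
`(U')² + q U² = (a')² f² + (a² f f')'`. For a standing wave, `q = ε² - (p+1) f^{2p}` is exactly
the potential of `L₋`, so integrating over the loop and the half-line leaves
`∫ (a')² u² + ∫ (b')² v²` plus boundary values of the flux `a² f f'`. On the half-line both the
flux and its derivative are integrable, so the flux vanishes at infinity. At the vertex the
Kirchhoff conditions for `(u, v)` and for `(U, V)` force `a` and `b` to agree, and the flux terms
cancel.
-/

/-- The quadratic-form density of `L₋` around the standing wave `f`, evaluated at `U`. -/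
noncomputable def lMinusDensity (p ε : ℝ) (f U : ℝ → ℝ) (x : ℝ) : ℝ :=
  deriv U x ^ 2 + ε ^ 2 * U x ^ 2 - (p + 1) * f x ^ (2 * p) * U x ^ 2

noncomputable def groundStateFlux (a f : ℝ → ℝ) (x : ℝ) : ℝ :=
  a x ^ 2 * (f x * deriv f x)

theorem ContinuousOn.exists_forall_norm_le_of_tendsto {g : ℝ → ℝ} {L c : ℝ}
    (hg : ContinuousOn g (Ici L)) (hlim : Tendsto g atTop (𝓝 c)) :
    ∃ C, ∀ x ∈ Ici L, ‖g x‖ ≤ C := by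
  obtain ⟨s, hs, hbdd⟩ := Metric.exists_isBounded_image_of_tendsto hlim
  obtain ⟨M, hM⟩ := mem_atTop_sets.mp hs
  have hcpt : Bornology.IsBounded (g '' Icc L M) :=
    (isCompact_Icc.image_of_continuousOn (hg.mono Icc_subset_Ici_self)).isBounded
  obtain ⟨C, hC⟩ := isBounded_iff_forall_norm_le.mp (hcpt.union hbdd)
  refine ⟨C, fun x hx => hC _ ?_⟩
  rcases le_total x M with hxM | hMx
  · exact Or.inl (mem_image_of_mem g ⟨hx, hxM⟩)
  · exact Or.inr (mem_image_of_mem g (hM x hMx))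

section GroundStateSubstitution

variable {p ε : ℝ} {a f : ℝ → ℝ}

theorem contDiff_groundStateFlux (ha : ContDiff ℝ 1 a) (hf : ContDiff ℝ 2 f) :
    ContDiff ℝ 1 (groundStateFlux a f) :=
  (ha.pow 2).mul ((hf.of_le one_le_two).mul hf.deriv')

theorem deriv_groundStateFlux {x q : ℝ} (ha : DifferentiableAt ℝ a x)
    (hf : DifferentiableAt ℝ f x) (hf' : DifferentiableAt ℝ (deriv f) x)
    (hq : deriv (deriv f) x = q * f x) :
    deriv (groundStateFlux a f) x =
      deriv (fun y => a y * f y) x ^ 2 + q * (a x * f x) ^ 2 - deriv a x ^ 2 * f x ^ 2 := by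
  have hflux : HasDerivAt (groundStateFlux a f)
      (2 * a x * deriv a x * (f x * deriv f x)
        + a x ^ 2 * (deriv f x * deriv f x + f x * deriv (deriv f) x)) x := by
    refine ((ha.hasDerivAt.fun_pow 2).mul (hf.hasDerivAt.mul hf'.hasDerivAt)).congr_deriv ?_
    push_cast [Pi.mul_apply]
    ring
  rw [hflux.deriv, deriv_fun_mul ha hf, hq]
  ring

theorem deriv_deriv_eq_of_stationary {x : ℝ} (hpos : 0 < f x)
    (heq : -(deriv (deriv f) x) + ε ^ 2 * f x - (p + 1) * f x ^ (2 * p + 1) = 0) :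
    deriv (deriv f) x = (ε ^ 2 - (p + 1) * f x ^ (2 * p)) * f x := by
  rw [rpow_add hpos, rpow_one] at heq
  linarith

theorem lMinusDensity_mul_eq {x : ℝ} (ha : ContDiff ℝ 1 a) (hf : ContDiff ℝ 2 f)
    (hpos : 0 < f x)
    (heq : -(deriv (deriv f) x) + ε ^ 2 * f x - (p + 1) * f x ^ (2 * p + 1) = 0) :
    lMinusDensity p ε f (fun y => a y * f y) x =
      deriv a x ^ 2 * f x ^ 2 + deriv (groundStateFlux a f) x := by
  rw [deriv_groundStateFlux (ha.differentiable one_ne_zero x)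
    (hf.differentiable two_ne_zero x) (hf.deriv'.differentiable one_ne_zero x)
    (deriv_deriv_eq_of_stationary hpos heq), lMinusDensity]
  ring

theorem integral_lMinusDensity_eq_of_Icc {s t : ℝ} (hst : s ≤ t) (ha : ContDiff ℝ 1 a)
    (hf : ContDiff ℝ 2 f) (hpos : ∀ x ∈ Icc s t, 0 < f x)
    (heq : ∀ x ∈ Icc s t,
      -(deriv (deriv f) x) + ε ^ 2 * f x - (p + 1) * f x ^ (2 * p + 1) = 0) :
    ∫ x in s..t, lMinusDensity p ε f (fun y => a y * f y) x =
      (∫ x in s..t, deriv a x ^ 2 * f x ^ 2)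
        + (groundStateFlux a f t - groundStateFlux a f s) := by
  have hflux := contDiff_groundStateFlux ha hf
  have hdens : EqOn (lMinusDensity p ε f (fun y => a y * f y))
      (fun x => deriv a x ^ 2 * f x ^ 2 + deriv (groundStateFlux a f) x) (uIcc s t) := by
    rw [uIcc_of_le hst]
    exact fun x hx => lMinusDensity_mul_eq ha hf (hpos x hx) (heq x hx)
  have hcont : Continuous fun x => deriv a x ^ 2 * f x ^ 2 :=
    ((ha.continuous_deriv le_rfl).pow 2).mul (hf.continuous.pow 2)
  rw [intervalIntegral.integral_congr hdens,
    intervalIntegral.integral_add (hcont.intervalIntegrable s t)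
      ((hflux.continuous_deriv le_rfl).intervalIntegrable s t),
    intervalIntegral.integral_deriv_eq_sub
      (fun x _ => hflux.differentiable one_ne_zero x)
      ((hflux.continuous_deriv le_rfl).intervalIntegrable s t)]

theorem integrableOn_lMinusDensity_Ioi {L : ℝ} {U : ℝ → ℝ} (hp : 0 < p) (hf : Continuous f)
    (hpos : ∀ x ∈ Ici L, 0 < f x) (hlim : Tendsto f atTop (𝓝 0)) (hU : Continuous U)
    (hU' : Continuous (deriv U))
    (hint : IntegrableOn (fun x => deriv U x ^ 2 + U x ^ 2) (Ioi L)) :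
    IntegrableOn (lMinusDensity p ε f U) (Ioi L) := by
  have hsq : IntegrableOn (fun x => U x ^ 2) (Ioi L) :=
    hint.mono' (hU.pow 2).aestronglyMeasurable (Eventually.of_forall fun x => by
      rw [norm_of_nonneg (sq_nonneg _)]; linarith [sq_nonneg (deriv U x)])
  have hsq' : IntegrableOn (fun x => deriv U x ^ 2) (Ioi L) :=
    hint.mono' (hU'.pow 2).aestronglyMeasurable (Eventually.of_forall fun x => by
      rw [norm_of_nonneg (sq_nonneg _)]; linarith [sq_nonneg (U x)])
  have hpot : ContinuousOn (fun x => f x ^ (2 * p)) (Ici L) :=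
    hf.continuousOn.rpow_const fun x hx => Or.inl (hpos x hx).ne'
  have hpotlim : Tendsto (fun x => f x ^ (2 * p)) atTop (𝓝 0) := by
    have := hlim.rpow_const (p := 2 * p) (Or.inr (by positivity))
    rwa [zero_rpow (by positivity)] at this
  obtain ⟨C, hC⟩ := hpot.exists_forall_norm_le_of_tendsto hpotlim
  have hpotsq : IntegrableOn (fun x => f x ^ (2 * p) * U x ^ 2) (Ioi L) :=
    hsq.bdd_mul ((hpot.mono Ioi_subset_Ici_self).aestronglyMeasurable measurableSet_Ioi)
      ((ae_restrict_iff' measurableSet_Ioi).2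
        (Eventually.of_forall fun x hx => hC x (mem_Ici_of_Ioi hx)))
  convert (hsq'.add (hsq.const_mul (ε ^ 2))).sub (hpotsq.const_mul (p + 1)) using 1
  funext x
  simp only [lMinusDensity, Pi.add_apply, Pi.sub_apply]
  ring

theorem integrableOn_groundStateFlux_Ioi {L : ℝ} (ha : ContDiff ℝ 1 a) (hf : ContDiff ℝ 1 f)
    (hint : IntegrableOn (fun x => deriv (fun y => a y * f y) x ^ 2 + (a x * f x) ^ 2) (Ioi L))
    (hint' : IntegrableOn (fun x => deriv a x ^ 2 * f x ^ 2) (Ioi L)) :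
    IntegrableOn (groundStateFlux a f) (Ioi L) := by
  have hcont : Continuous (groundStateFlux a f) :=
    (ha.continuous.pow 2).mul (hf.continuous.mul (hf.continuous_deriv le_rfl))
  refine (hint.add hint').mono' hcont.aestronglyMeasurable (Eventually.of_forall fun x => ?_)
  -- with `U = a f`, the flux is `U · (U' - a' f)`
  set A := a x * f x
  set B := deriv a x * f x
  set D := a x * deriv f x
  have hflux : groundStateFlux a f x = A * D := by simp only [groundStateFlux, A, D]; ring
  have hU' : deriv (fun y => a y * f y) x = B + D :=
    deriv_fun_mul (ha.differentiable one_ne_zero x) (hf.differentiable one_ne_zero x)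
  simp only [Pi.add_apply, hflux, hU', norm_eq_abs, abs_le]
  constructor <;> nlinarith [sq_nonneg (A - D), sq_nonneg (A + D), sq_nonneg (B + D + B),
    sq_nonneg B]

theorem integral_lMinusDensity_eq_of_Ioi {L : ℝ} (hp : 0 < p) (ha : ContDiff ℝ 1 a)
    (hf : ContDiff ℝ 2 f) (hpos : ∀ x ∈ Ici L, 0 < f x)
    (heq : ∀ x ∈ Ici L,
      -(deriv (deriv f) x) + ε ^ 2 * f x - (p + 1) * f x ^ (2 * p + 1) = 0)
    (hlim : Tendsto f atTop (𝓝 0))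
    (hint : IntegrableOn (fun x => deriv (fun y => a y * f y) x ^ 2 + (a x * f x) ^ 2) (Ioi L))
    (hint' : IntegrableOn (fun x => deriv a x ^ 2 * f x ^ 2) (Ioi L)) :
    ∫ x in Ioi L, lMinusDensity p ε f (fun y => a y * f y) x =
      (∫ x in Ioi L, deriv a x ^ 2 * f x ^ 2) - groundStateFlux a f L := by
  have hflux := contDiff_groundStateFlux ha hf
  have hderiv : ∀ x, HasDerivAt (groundStateFlux a f) (deriv (groundStateFlux a f) x) x :=
    fun x => (hflux.differentiable one_ne_zero x).hasDerivAt
  have hdens : EqOn (lMinusDensity p ε f (fun y => a y * f y))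
      (fun x => deriv a x ^ 2 * f x ^ 2 + deriv (groundStateFlux a f) x) (Ioi L) :=
    fun x hx => lMinusDensity_mul_eq ha hf (hpos x (mem_Ici_of_Ioi hx)) (heq x (mem_Ici_of_Ioi hx))
  have hU' : Continuous (deriv fun y => a y * f y) :=
    (ha.mul (hf.of_le one_le_two)).continuous_deriv le_rfl
  have hdensInt : IntegrableOn (lMinusDensity p ε f (fun y => a y * f y)) (Ioi L) :=
    integrableOn_lMinusDensity_Ioi hp hf.continuous hpos hlim (ha.continuous.mul hf.continuous)
      hU' hint
  have hderivInt : IntegrableOn (deriv (groundStateFlux a f)) (Ioi L) :=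
    (hdensInt.sub hint').congr_fun (fun x hx => by simp only [Pi.sub_apply, hdens hx]; ring)
      measurableSet_Ioi
  have hvanish : Tendsto (groundStateFlux a f) atTop (𝓝 0) :=
    tendsto_zero_of_hasDerivAt_of_integrableOn_Ioi (fun x _ => hderiv x) hderivInt
      (integrableOn_groundStateFlux_Ioi ha (hf.of_le one_le_two) hint hint')
  rw [setIntegral_congr_fun measurableSet_Ioi hdens, integral_add hint' hderivInt,
    integral_Ioi_of_hasDerivAt_of_tendsto' (fun x _ => hderiv x) hderivInt hvanish]
  ring

end GroundStateSubstitution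

theorem groundStateFlux_sub_eq_of_kirchhoff {a b u v : ℝ → ℝ} {s t : ℝ} (hu : u t ≠ 0)
    (hK1 : u t = u s) (hK2 : u t = v t) (hK3 : deriv u t - deriv u s = deriv v t)
    (hK1' : a t * u t = a s * u s) (hK2' : a t * u t = b t * v t) :
    groundStateFlux a u t - groundStateFlux a u s = groundStateFlux b v t := by
  rw [← hK1] at hK1'
  rw [← hK2] at hK2'
  have has : a s = a t := (mul_right_cancel₀ hu hK1').symm
  have hbt : b t = a t := (mul_right_cancel₀ hu hK2').symm
  simp only [groundStateFlux, has, hbt, ← hK1, ← hK2, ← hK3]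
  ring

theorem stmt19_general (p ε L : ℝ) (hp : 0 < p) (hL : 0 < L)
    (u v a b : ℝ → ℝ)
    (hu : ContDiff ℝ 2 u) (hv : ContDiff ℝ 2 v)
    (ha : ContDiff ℝ 1 a) (hb : ContDiff ℝ 1 b)
    (hupos : ∀ x ∈ Icc (-L) L, 0 < u x) (hvpos : ∀ x ∈ Ici L, 0 < v x)
    (hueq : ∀ x ∈ Icc (-L) L,
      -(deriv (deriv u) x) + ε ^ 2 * u x - (p + 1) * (u x) ^ (2 * p + 1) = 0)
    (hveq : ∀ x ∈ Ici L,
      -(deriv (deriv v) x) + ε ^ 2 * v x - (p + 1) * (v x) ^ (2 * p + 1) = 0)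
    (hK1 : u L = u (-L)) (hK2 : u L = v L)
    (hK3 : deriv u L - deriv u (-L) = deriv v L)
    (hK1' : a L * u L = a (-L) * u (-L)) (hK2' : a L * u L = b L * v L)
    (hvdec : Tendsto v atTop (nhds 0))
    (hint1 : IntegrableOn (fun x =>
      (deriv (fun x => b x * v x) x) ^ 2 + (b x * v x) ^ 2) (Ioi L))
    (hint2 : IntegrableOn (fun x => (deriv b x) ^ 2 * (v x) ^ 2) (Ioi L)) :
    ((∫ x in (-L)..L,
        (deriv (fun x => a x * u x) x) ^ 2 + ε ^ 2 * (a x * u x) ^ 2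
          - (p + 1) * (u x) ^ (2 * p) * (a x * u x) ^ 2)
      + ∫ x in Ioi L,
        (deriv (fun x => b x * v x) x) ^ 2 + ε ^ 2 * (b x * v x) ^ 2
          - (p + 1) * (v x) ^ (2 * p) * (b x * v x) ^ 2)
      = (∫ x in (-L)..L, (deriv a x) ^ 2 * (u x) ^ 2)
        + ∫ x in Ioi L, (deriv b x) ^ 2 * (v x) ^ 2 ∧
    (0:ℝ) ≤ (∫ x in (-L)..L, (deriv a x) ^ 2 * (u x) ^ 2)
        + ∫ x in Ioi L, (deriv b x) ^ 2 * (v x) ^ 2 := by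
  have hL' : -L ≤ L := by linarith
  have hloop := integral_lMinusDensity_eq_of_Icc hL' ha hu hupos hueq
  have hline := integral_lMinusDensity_eq_of_Ioi hp hb hv hvpos hveq hvdec hint1 hint2
  have hvertex := groundStateFlux_sub_eq_of_kirchhoff (hupos L ⟨hL', le_rfl⟩).ne'
    hK1 hK2 hK3 hK1' hK2'
  simp only [lMinusDensity] at hloop hline
  refine ⟨by linarith, add_nonneg ?_ ?_⟩
  · exact intervalIntegral.integral_nonneg hL' fun x _ => by positivity
  · exact setIntegral_nonneg measurableSet_Ioi fun x _ => by positivity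

/-- Positivity of the `L₋` quadratic form for the positive primary-branch standing wave on the
tadpole graph: with `(U,V) = (a·u, b·v)` satisfying the Kirchhoff conditions, the quadratic
form reduces to `∫(a')²u² + ∫(b')²v² ≥ 0`. -/
theorem stmt19 (p ε L : ℝ) (hp : 0 < p) (hL : 0 < L)
    (u v a b : ℝ → ℝ)
    (hu : ContDiff ℝ 2 u) (hv : ContDiff ℝ 2 v)
    (ha : ContDiff ℝ 1 a) (hb : ContDiff ℝ 1 b)
    (hupos : ∀ x ∈ Icc (-L) L, 0 < u x) (hvpos : ∀ x ∈ Ici L, 0 < v x)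
    (hueq : ∀ x ∈ Icc (-L) L,
      -(deriv (deriv u) x) + ε ^ 2 * u x - (p + 1) * (u x) ^ (2 * p + 1) = 0)
    (hveq : ∀ x ∈ Ici L,
      -(deriv (deriv v) x) + ε ^ 2 * v x - (p + 1) * (v x) ^ (2 * p + 1) = 0)
    (hK1 : u L = u (-L)) (hK2 : u L = v L)
    (hK3 : deriv u L - deriv u (-L) = deriv v L)
    (hK1' : a L * u L = a (-L) * u (-L)) (hK2' : a L * u L = b L * v L)
    (hK3' : deriv (fun x => a x * u x) L - deriv (fun x => a x * u x) (-L)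
      = deriv (fun x => b x * v x) L)
    (hvdec : Tendsto v atTop (nhds 0)) (hvdec' : Tendsto (deriv v) atTop (nhds 0))
    (hUdec : Tendsto (fun x => b x * v x) atTop (nhds 0))
    (hUdec' : Tendsto (deriv (fun x => b x * v x)) atTop (nhds 0))
    (hint1 : IntegrableOn (fun x =>
      (deriv (fun x => b x * v x) x) ^ 2 + (b x * v x) ^ 2) (Ioi L))
    (hint2 : IntegrableOn (fun x => (deriv b x) ^ 2 * (v x) ^ 2) (Ioi L)) :
    ((∫ x in (-L)..L,
        (deriv (fun x => a x * u x) x) ^ 2 + ε ^ 2 * (a x * u x) ^ 2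
          - (p + 1) * (u x) ^ (2 * p) * (a x * u x) ^ 2)
      + ∫ x in Ioi L,
        (deriv (fun x => b x * v x) x) ^ 2 + ε ^ 2 * (b x * v x) ^ 2
          - (p + 1) * (v x) ^ (2 * p) * (b x * v x) ^ 2)
      = (∫ x in (-L)..L, (deriv a x) ^ 2 * (u x) ^ 2)
        + ∫ x in Ioi L, (deriv b x) ^ 2 * (v x) ^ 2 ∧
    (0:ℝ) ≤ (∫ x in (-L)..L, (deriv a x) ^ 2 * (u x) ^ 2)
        + ∫ x in Ioi L, (deriv b x) ^ 2 * (v x) ^ 2 :=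
  stmt19_general p ε L hp hL u v a b hu hv ha hb hupos hvpos hueq hveq hK1 hK2 hK3 hK1' hK2' hvdec
    hint1 hint2
end
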